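/- arXiv:2412.01803 — 4 statements merged into one kernel-verified Lean document; each statement's English description precedes it below -/
import Mathlib

section
/- Let F be a finite field, M an element of GL_2(F) of finite multiplicative order d, and a an integer relatively prime to d. If tr(M) = 0, then tr(M^a) = 0. -/
/-!
By Cayley–Hamilton a trace-zero `2 × 2` matrix satisfies `A ^ 2 = -det A • 1`, so its even powers
are scalar and its odd powers have trace zero; since `adj A` has the same trace as `A`, so does
`A⁻¹`. This settles odd `a`. For even `a`, coprimality makes `d` odd, and then
`0 = tr (M ^ d) = tr 1 = 2`: in characteristic `2` every scalar `2 × 2` matrix has trace zero.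
-/

namespace Matrix

variable {R : Type*} [CommRing R] {A : Matrix (Fin 2) (Fin 2) R}

theorem mul_self_eq_neg_det_smul_one_of_trace_eq_zero (h : A.trace = 0) :
    A * A = -A.det • (1 : Matrix (Fin 2) (Fin 2) R) := by
  rw [trace_fin_two, add_eq_zero_iff_eq_neg'] at h
  ext i j
  fin_cases i <;> fin_cases j <;> simp [mul_apply, det_fin_two, h] <;> ring

theorem pow_two_mul_eq_of_trace_eq_zero (h : A.trace = 0) (k : ℕ) :
    A ^ (2 * k) = (-A.det) ^ k • (1 : Matrix (Fin 2) (Fin 2) R) := by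
  rw [pow_mul, sq, mul_self_eq_neg_det_smul_one_of_trace_eq_zero h, smul_pow, one_pow]

theorem trace_pow_eq_zero_of_odd (h : A.trace = 0) {n : ℕ} (hn : Odd n) :
    (A ^ n).trace = 0 := by
  obtain ⟨k, rfl⟩ := hn
  rw [pow_succ, pow_two_mul_eq_of_trace_eq_zero h, smul_mul_assoc, one_mul, trace_smul, h,
    smul_zero]

theorem two_eq_zero_of_trace_eq_zero_of_pow_eq_one (h : A.trace = 0) {d : ℕ} (hd : Odd d)
    (hA : A ^ d = 1) : (2 : R) = 0 := by
  simpa [hA] using trace_pow_eq_zero_of_odd h hd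

theorem trace_pow_eq_zero_of_two_eq_zero (h : A.trace = 0) (h2 : (2 : R) = 0) (n : ℕ) :
    (A ^ n).trace = 0 := by
  obtain ⟨k, rfl | rfl⟩ := n.even_or_odd'
  · simp [pow_two_mul_eq_of_trace_eq_zero h, h2]
  · exact trace_pow_eq_zero_of_odd h (odd_two_mul_add_one k)

theorem trace_inv_eq_zero_of_trace_eq_zero (h : A.trace = 0) : A⁻¹.trace = 0 := by
  have h_adj : A.adjugate.trace = A.trace := by simp [trace_fin_two, adjugate_fin_two, add_comm]
  rw [inv_def, trace_smul, h_adj, h, smul_zero]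

theorem GeneralLinearGroup.trace_zpow_eq_zero_of_trace_pow_natAbs_eq_zero {M : GL (Fin 2) R}
    {n : ℤ} (h : ((M : Matrix (Fin 2) (Fin 2) R) ^ n.natAbs).trace = 0) :
    ((M ^ n : GL (Fin 2) R) : Matrix (Fin 2) (Fin 2) R).trace = 0 := by
  obtain hn | hn := n.natAbs_eq <;> generalize n.natAbs = k at hn h <;> subst hn
  · rwa [zpow_natCast, Units.val_pow_eq_pow_val]
  · rw [_root_.zpow_neg, zpow_natCast, coe_units_inv, Units.val_pow_eq_pow_val]
    exact trace_inv_eq_zero_of_trace_eq_zero h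

end Matrix

theorem Int.odd_of_gcd_eq_one_of_even {a : ℤ} {d : ℕ} (ha : Int.gcd a d = 1) (h : Even a) :
    Odd d :=
  Nat.Coprime.odd_of_left <| Nat.Coprime.coprime_dvd_left
    (even_iff_two_dvd.mp (Int.natAbs_even.mpr h)) ha

theorem stmt_0_general (F : Type*) [Field F]
    (M : GL (Fin 2) F) (d : ℕ) (hd : orderOf M = d)
    (a : ℤ) (ha : Int.gcd a (d : ℤ) = 1)
    (htr : Matrix.trace (M : Matrix (Fin 2) (Fin 2) F) = 0) :
    Matrix.trace ((M ^ a : GL (Fin 2) F) : Matrix (Fin 2) (Fin 2) F) = 0 := by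
  apply Matrix.GeneralLinearGroup.trace_zpow_eq_zero_of_trace_pow_natAbs_eq_zero
  obtain ha_even | ha_odd := a.even_or_odd
  · have hMd : (M : Matrix (Fin 2) (Fin 2) F) ^ d = 1 := by
      rw [← Units.val_pow_eq_pow_val, ← hd, pow_orderOf_eq_one, Units.val_one]
    have h2 : (2 : F) = 0 := Matrix.two_eq_zero_of_trace_eq_zero_of_pow_eq_one htr
      (Int.odd_of_gcd_eq_one_of_even ha ha_even) hMd
    exact Matrix.trace_pow_eq_zero_of_two_eq_zero htr h2 _
  · exact Matrix.trace_pow_eq_zero_of_odd htr (Int.natAbs_odd.mpr ha_odd)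

/-- Let `F` be a finite field, `M ∈ GL₂(F)` of multiplicative order `d`, and `a` an
integer relatively prime to `d`. If `tr M = 0`, then `tr (M ^ a) = 0`. -/
theorem stmt_0 (F : Type*) [Field F] [Fintype F]
    (M : GL (Fin 2) F) (d : ℕ) (hd : orderOf M = d)
    (a : ℤ) (ha : Int.gcd a (d : ℤ) = 1)
    (htr : Matrix.trace (M : Matrix (Fin 2) (Fin 2) F) = 0) :
    Matrix.trace ((M ^ a : GL (Fin 2) F) : Matrix (Fin 2) (Fin 2) F) = 0 :=
  stmt_0_general F M d hd a ha htr
end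

section
/- Let G be a finite group of order d, and let χ: G → ℚ be a class function such that χ(g) = χ(g^a) for all g in G and all a coprime to d. Then χ is a ℚ-linear combination of characters Ind_H^G(1) where H ranges over cyclic subgroups of G. -/
/-!
Let `W` be the space of rational class functions invariant under coprime powers and `V` the
span of the characters `Ind_⟨g⟩^G 1`, which lie in `W`. Such a character vanishes off the
elements conjugate into `⟨g⟩`, so in orders `> orderOf g`, and among elements of order
`orderOf g` it is nonzero exactly on the power-conjugates of `g`, where every `χ ∈ W` is
constant. So for `χ ∈ W` vanishing in orders `> m`, subtracting `χ g / Ind_⟨g⟩^G 1 (g)` times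
`Ind_⟨g⟩^G 1` for an element `g` of order `m` shrinks the support of `χ` in order `m` and
creates none above it. Induction on the size of that support and then on `m` gives `W ≤ V`.
-/

/-- The character of `Ind_H^G 1` at `g`: the number of fixed points of `g` on `G ⧸ H`,
computed as `#{x : x⁻¹ g x ∈ H} / |H|`. -/
noncomputable def indTrivChar (G : Type*) [Group G] (H : Subgroup G) (g : G) : ℚ :=
  (Nat.card {x : G // x⁻¹ * g * x ∈ H} : ℚ) / (Nat.card H : ℚ)

section Group

variable {G : Type*} [Group G]

theorem orderOf_inv_mul_mul (x h : G) : orderOf (x⁻¹ * h * x) = orderOf h :=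
  SemiconjBy.orderOf_eq x (by simp [SemiconjBy, mul_assoc])

theorem indTrivChar_conj (H : Subgroup G) (g k : G) :
    indTrivChar G H (k * g * k⁻¹) = indTrivChar G H g := by
  unfold indTrivChar
  congr 2
  exact Nat.card_congr <| (Equiv.mulLeft k⁻¹).subtypeEquiv fun x ↦ by simp [mul_assoc]

theorem exists_conj_mem_of_indTrivChar_ne_zero {H : Subgroup G} {h : G}
    (hne : indTrivChar G H h ≠ 0) : ∃ x : G, x⁻¹ * h * x ∈ H := by
  by_contra! hc
  have : IsEmpty {x : G // x⁻¹ * h * x ∈ H} := ⟨fun x ↦ hc x x.2⟩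
  simp [indTrivChar] at hne

theorem indTrivChar_zpowers_self_pos [Finite G] (g : G) :
    0 < indTrivChar G (Subgroup.zpowers g) g := by
  have : Nonempty {x : G // x⁻¹ * g * x ∈ Subgroup.zpowers g} := ⟨⟨1, by simp⟩⟩
  exact div_pos (mod_cast Nat.card_pos) (mod_cast Nat.card_pos)

variable (G) in
def cyclicInductionSpan : Submodule ℚ (G → ℚ) :=
  Submodule.span ℚ (Set.range fun g : G ↦ indTrivChar G (Subgroup.zpowers g))

variable (G) in
def vanishingOnOrderGE (m : ℕ) : Submodule ℚ (G → ℚ) where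
  carrier := {χ | ∀ g : G, m ≤ orderOf g → χ g = 0}
  add_mem' hχ hψ g hg := by simp [hχ g hg, hψ g hg]
  zero_mem' _ _ := rfl
  smul_mem' c χ hχ g hg := by simp [hχ g hg]

theorem indTrivChar_zpowers_mem_vanishingOnOrderGE [Finite G] (g : G) :
    indTrivChar G (Subgroup.zpowers g) ∈ vanishingOnOrderGE G (orderOf g + 1) := by
  intro h hh
  by_contra hne
  obtain ⟨x, hx⟩ := exists_conj_mem_of_indTrivChar_ne_zero hne
  have := Nat.le_of_dvd (orderOf_pos g)
    (orderOf_inv_mul_mul x h ▸ orderOf_dvd_of_mem_zpowers hx)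
  omega

end Group

section Fintype

variable {G : Type*} [Group G] [Fintype G]

theorem exists_pow_coprime_card_eq_pow (g : G) {k : ℕ} (hk : k.Coprime (orderOf g)) :
    ∃ a : ℕ, a.Coprime (Fintype.card G) ∧ g ^ a = g ^ k := by
  obtain ⟨u, hu⟩ := ZMod.unitsMap_surjective orderOf_dvd_card (ZMod.unitOfCoprime k hk)
  refine ⟨(u : ZMod (Fintype.card G)).val, ZMod.val_coe_unit_coprime u, ?_⟩
  rw [pow_eq_pow_iff_modEq, ← ZMod.natCast_eq_natCast_iff, ZMod.natCast_val,
    ← ZMod.unitsMap_val orderOf_dvd_card, hu, ZMod.coe_unitOfCoprime]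

theorem Subgroup.pow_mem_iff_of_coprime_card (H : Subgroup G) {a : ℕ}
    (ha : a.Coprime (Fintype.card G)) {y : G} : y ^ a ∈ H ↔ y ∈ H := by
  refine ⟨fun h ↦ ?_, fun h ↦ pow_mem h a⟩
  obtain ⟨m, hm⟩ :=
    exists_pow_eq_self_of_coprime (x := y) (ha.coprime_dvd_right orderOf_dvd_card)
  exact hm ▸ pow_mem h m

variable (G) in
def powerInvariantClassFunctions : Submodule ℚ (G → ℚ) where
  carrier := {χ | (∀ g h : G, χ (h * g * h⁻¹) = χ g) ∧
    ∀ (g : G) (a : ℕ), a.Coprime (Fintype.card G) → χ (g ^ a) = χ g}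
  add_mem' := by
    rintro χ ψ ⟨hχc, hχp⟩ ⟨hψc, hψp⟩
    exact ⟨fun g h ↦ by simp [hχc, hψc], fun g a ha ↦ by simp [hχp g a ha, hψp g a ha]⟩
  zero_mem' := by simp
  smul_mem' := by
    rintro c χ ⟨hχc, hχp⟩
    exact ⟨fun g h ↦ by simp [hχc], fun g a ha ↦ by simp [hχp g a ha]⟩

theorem indTrivChar_pow (H : Subgroup G) (g : G) {a : ℕ} (ha : a.Coprime (Fintype.card G)) :
    indTrivChar G H (g ^ a) = indTrivChar G H g := by
  unfold indTrivChar
  congr 2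
  refine Nat.card_congr <| (Equiv.refl G).subtypeEquiv fun x ↦ ?_
  have := H.pow_mem_iff_of_coprime_card ha (y := x⁻¹ * g * x⁻¹⁻¹)
  rwa [conj_pow, inv_inv] at this

theorem indTrivChar_mem_powerInvariantClassFunctions (H : Subgroup G) :
    indTrivChar G H ∈ powerInvariantClassFunctions G :=
  ⟨indTrivChar_conj H, fun _ _ ↦ indTrivChar_pow H _⟩

/-- The hypotheses on `g, h, x` say that `⟨h⟩` and `⟨g⟩` are conjugate. -/
theorem apply_eq_of_conj_mem_zpowers_of_orderOf_eq {χ : G → ℚ}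
    (hχ : χ ∈ powerInvariantClassFunctions G) {g h x : G}
    (hx : x⁻¹ * h * x ∈ Subgroup.zpowers g) (hord : orderOf h = orderOf g) : χ h = χ g := by
  set y := x⁻¹ * h * x
  have hy : orderOf y = orderOf g := (orderOf_inv_mul_mul x h).trans hord
  have hgen : Subgroup.zpowers y = Subgroup.zpowers g :=
    Subgroup.eq_of_le_of_card_ge (Subgroup.zpowers_le.mpr hx)
      (by rw [Nat.card_zpowers, Nat.card_zpowers, hy])
  obtain ⟨k, hk : y ^ k = g⟩ : g ∈ Submonoid.powers y :=
    mem_powers_iff_mem_zpowers.mpr (hgen ▸ Subgroup.mem_zpowers g)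
  have hk_coprime : k.Coprime (orderOf y) := by
    have hyk : orderOf (y ^ k) = orderOf y := by rw [hk, hy]
    rw [orderOf_pow, Nat.div_eq_self] at hyk
    exact Nat.coprime_comm.mp (hyk.resolve_left (orderOf_pos y).ne')
  obtain ⟨a, ha, hya⟩ := exists_pow_coprime_card_eq_pow y hk_coprime
  calc χ h = χ y := by simpa using (hχ.1 h x⁻¹).symm
    _ = χ (y ^ a) := (hχ.2 y a ha).symm
    _ = χ g := by rw [hya, hk]

variable (G) in
noncomputable def orderSupport (χ : G → ℚ) (m : ℕ) : Finset G :=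
  {g | orderOf g = m ∧ χ g ≠ 0}

theorem orderSupport_sub_smul_indTrivChar_ssubset {χ : G → ℚ}
    (hχ : χ ∈ powerInvariantClassFunctions G) {g : G} (hg : χ g ≠ 0) :
    orderSupport G (χ - (χ g / indTrivChar G (Subgroup.zpowers g) g) •
        indTrivChar G (Subgroup.zpowers g)) (orderOf g) ⊂ orderSupport G χ (orderOf g) := by
  set I := indTrivChar G (Subgroup.zpowers g)
  have hIg : I g ≠ 0 := (indTrivChar_zpowers_self_pos g).ne'
  have hsub :
      orderSupport G (χ - (χ g / I g) • I) (orderOf g) ⊆ orderSupport G χ (orderOf g) := by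
    intro h hh
    simp only [orderSupport, Finset.mem_filter, Finset.mem_univ, true_and, Pi.sub_apply,
      Pi.smul_apply, smul_eq_mul] at hh ⊢
    obtain ⟨hord, hne⟩ := hh
    refine ⟨hord, fun hχh ↦ ?_⟩
    have hIh : I h ≠ 0 := fun hIh ↦ hne (by simp [hIh, hχh])
    obtain ⟨x, hx⟩ := exists_conj_mem_of_indTrivChar_ne_zero hIh
    exact hg (apply_eq_of_conj_mem_zpowers_of_orderOf_eq hχ hx hord ▸ hχh)
  refine (Finset.ssubset_iff_of_subset hsub).mpr ⟨g, by simp [orderSupport, hg], ?_⟩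
  simp [orderSupport, div_mul_cancel₀ _ hIg]

theorem inf_vanishingOnOrderGE_succ_le (m : ℕ) :
    powerInvariantClassFunctions G ⊓ vanishingOnOrderGE G (m + 1) ≤
      cyclicInductionSpan G ⊔ (powerInvariantClassFunctions G ⊓ vanishingOnOrderGE G m) := by
  rintro χ ⟨hχ, hχm⟩
  induction hn : (orderSupport G χ m).card using Nat.strong_induction_on generalizing χ with
  | _ n ih =>
  rcases (orderSupport G χ m).eq_empty_or_nonempty with hempty | ⟨g, hg⟩
  · refine Submodule.mem_sup_right ⟨hχ, fun h hh ↦ ?_⟩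
    rcases hh.eq_or_lt with hord | hlt
    · by_contra hne
      have : h ∈ orderSupport G χ m := by simp [orderSupport, hord, hne]
      simp [hempty] at this
    · exact hχm h hlt
  · simp only [orderSupport, Finset.mem_filter, Finset.mem_univ, true_and] at hg
    obtain ⟨rfl, hg⟩ := hg
    set I := indTrivChar G (Subgroup.zpowers g)
    have hI_span : I ∈ cyclicInductionSpan G := Submodule.subset_span ⟨g, rfl⟩
    have hrest : χ - (χ g / I g) • I ∈ cyclicInductionSpan G ⊔
        (powerInvariantClassFunctions G ⊓ vanishingOnOrderGE G (orderOf g)) :=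
      ih _ (hn ▸ Finset.card_lt_card (orderSupport_sub_smul_indTrivChar_ssubset hχ hg))
        (sub_mem hχ (Submodule.smul_mem _ _ (indTrivChar_mem_powerInvariantClassFunctions _)))
        (sub_mem hχm (Submodule.smul_mem _ _ (indTrivChar_zpowers_mem_vanishingOnOrderGE g))) rfl
    simpa using add_mem hrest (Submodule.mem_sup_left (Submodule.smul_mem _ (χ g / I g) hI_span))

theorem inf_vanishingOnOrderGE_le_cyclicInductionSpan (m : ℕ) :
    powerInvariantClassFunctions G ⊓ vanishingOnOrderGE G m ≤ cyclicInductionSpan G := by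
  induction m with
  | zero =>
    rintro χ ⟨-, hχ⟩
    obtain rfl : χ = 0 := funext fun g ↦ hχ g (Nat.zero_le _)
    exact zero_mem _
  | succ m ih => exact (inf_vanishingOnOrderGE_succ_le m).trans (sup_le le_rfl ih)

theorem powerInvariantClassFunctions_le_cyclicInductionSpan :
    powerInvariantClassFunctions G ≤ cyclicInductionSpan G := fun χ hχ ↦
  inf_vanishingOnOrderGE_le_cyclicInductionSpan (Fintype.card G + 1)
    ⟨hχ, fun g hg ↦ absurd (orderOf_le_card_univ (x := g)) (by omega)⟩

end Fintype

/-- Let `G` be a finite group of order `d`, and `χ : G → ℚ` a class function with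
`χ g = χ (g ^ a)` for all `g` and all `a` coprime to `d`. Then `χ` is a `ℚ`-linear
combination of characters `Ind_H^G 1` with `H` ranging over cyclic subgroups of `G`. -/
theorem stmt_6 (G : Type*) [Group G] [Fintype G] (χ : G → ℚ)
    (hclass : ∀ g h : G, χ (h * g * h⁻¹) = χ g)
    (hpow : ∀ (g : G) (a : ℕ), Nat.Coprime a (Fintype.card G) → χ (g ^ a) = χ g) :
    ∃ (n : ℕ) (H : Fin n → Subgroup G) (c : Fin n → ℚ),
      (∀ i, IsCyclic (H i)) ∧
      ∀ g : G, χ g = ∑ i, c i * indTrivChar G (H i) g := by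
  obtain ⟨c, hc⟩ := (Submodule.mem_span_range_iff_exists_fun ℚ).mp
    (powerInvariantClassFunctions_le_cyclicInductionSpan ⟨hclass, hpow⟩)
  let e := Fintype.equivFin G
  refine ⟨Fintype.card G, fun i ↦ Subgroup.zpowers (e.symm i), fun i ↦ c (e.symm i),
    fun _ ↦ inferInstance, fun g ↦ ?_⟩
  rw [← hc, Finset.sum_apply]
  exact (e.symm.sum_comp fun k ↦ c k * indTrivChar G (Subgroup.zpowers k) g).symm
end

section
/- Let G be a finite group and H_1, ..., H_t a complete list of cyclic subgroups of G up to conjugacy, ordered by increasing size. Let φ_i be the character of Ind_{H_i}^G(1) and let P_j be the indicator function of the power-conjugacy class of a fixed generator h_j of H_j. Writing φ_i = Σ_j b_{ij} P_j, the matrix (b_{ij}) is upper triangular with nonzero (positive) diagonal entries, hence invertible over ℚ. -/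
open scoped Classical in
/-- Indicator function of the power-conjugacy class of `h`: it is `1` at `g` iff the
cyclic subgroups `⟨g⟩` and `⟨h⟩` are conjugate in `G`. -/
noncomputable def powConjInd (G : Type*) [Group G] (h g : G) : ℚ :=
  if ∃ x : G, Subgroup.zpowers (x * g * x⁻¹) = Subgroup.zpowers h then 1 else 0

/-- The matrix entry `b i j = #{x ∈ G : x⁻¹ (H j) x ⊆ H i} / |H i|`. -/
noncomputable def bMat (G : Type*) [Group G] {t : ℕ} (H : Fin t → Subgroup G)
    (i j : Fin t) : ℚ :=
  (Nat.card {x : G // ∀ y ∈ H j, x⁻¹ * y * x ∈ H i} : ℚ) / (Nat.card (H i) : ℚ)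

section aux
variable {G : Type*} [Group G]

lemma isCyclic_zpowers (g : G) : IsCyclic (Subgroup.zpowers g) := by
  refine ⟨⟨⟨g, Subgroup.mem_zpowers g⟩, ?_⟩⟩
  rintro ⟨x, hx⟩
  obtain ⟨n, rfl⟩ := hx
  exact ⟨n, by ext; simp⟩

lemma key (K : Subgroup G) (g x : G) :
    (∀ y ∈ Subgroup.zpowers g, x⁻¹ * y * x ∈ K) ↔ x⁻¹ * g * x ∈ K := by
  constructor
  · intro h; exact h g (Subgroup.mem_zpowers g)
  · rintro h y ⟨n, rfl⟩
    have : x⁻¹ * g ^ n * x = (x⁻¹ * g * x) ^ n := by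
      have e : ∀ a : G, x⁻¹ * a * x = (MulAut.conj x⁻¹) a := by
        intro a; simp [MulAut.conj_apply]
      rw [e, e, map_zpow]
    rw [this]
    exact Subgroup.zpow_mem K h n

lemma conj_one_map (K : Subgroup G) :
    K.map (MulAut.conj (1 : G)).toMonoidHom = K := by
  ext y; simp [Subgroup.mem_map, MulAut.conj]
end aux

/-- Let `G` be a finite group and `H 1, …, H t` a complete list of cyclic subgroups of
`G` up to conjugacy, ordered by increasing size, with `h j` a generator of `H j`.
Let `φ i` be the character of `Ind_{H i}^G 1` and `P j` the indicator of the
power-conjugacy class of `h j`.  Then `φ i = ∑ j, b i j • P j` where the matrix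
`(b i j)` is triangular (`b i j ≠ 0 → j ≤ i`) with positive diagonal entries, hence
invertible over `ℚ`. -/
theorem stmt_8 (G : Type*) [Group G] [Finite G] (t : ℕ) (H : Fin t → Subgroup G)
    (hcyc : ∀ i, IsCyclic (H i))
    (hcomplete : ∀ K : Subgroup G, IsCyclic K →
      ∃! i : Fin t, ∃ x : G, K.map (MulAut.conj x).toMonoidHom = H i)
    (hord : ∀ i j : Fin t, i ≤ j → Nat.card (H i) ≤ Nat.card (H j))
    (h : Fin t → G) (hgen : ∀ j, Subgroup.zpowers (h j) = H j) :
    (∀ (i : Fin t) (g : G),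
        indTrivChar G (H i) g = ∑ j, bMat G H i j * powConjInd G (h j) g) ∧
    (∀ i j : Fin t, bMat G H i j ≠ 0 → j ≤ i) ∧
    (∀ i : Fin t, 0 < bMat G H i i) ∧
    IsUnit (Matrix.of (fun i j => bMat G H i j) : Matrix (Fin t) (Fin t) ℚ) := by
  classical
  -- triangularity
  have htri : ∀ i j : Fin t, bMat G H i j ≠ 0 → j ≤ i := by
    intro i j hne
    by_contra hji
    have hij : i < j := lt_of_not_ge hji
    have hnum : (Nat.card {x : G // ∀ y ∈ H j, x⁻¹ * y * x ∈ H i} : ℚ) ≠ 0 := by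
      intro h0
      apply hne
      unfold bMat
      rw [h0, zero_div]
    have hne0 : Nat.card {x : G // ∀ y ∈ H j, x⁻¹ * y * x ∈ H i} ≠ 0 := by
      exact_mod_cast hnum
    obtain ⟨⟨x, hx⟩⟩ := (Nat.card_ne_zero.mp hne0).1
    -- the conjugate of `H j` by `x⁻¹` lies in `H i`
    have hmap : (H j).map (MulAut.conj x⁻¹).toMonoidHom ≤ H i := by
      rintro _ ⟨y, hy, rfl⟩
      simpa [MulAut.conj_apply, mul_assoc] using hx y hy
    have hcard_map : Nat.card ((H j).map (MulAut.conj x⁻¹).toMonoidHom) = Nat.card (H j) :=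
      (Nat.card_congr ((H j).equivMapOfInjective _
        (MulAut.conj x⁻¹).injective).toEquiv).symm
    have h1 : Nat.card (H j) ≤ Nat.card (H i) := by
      rw [← hcard_map]
      exact Subgroup.card_le_of_le hmap
    have h2 : Nat.card (H i) ≤ Nat.card (H j) := hord i j hij.le
    have heq : (H j).map (MulAut.conj x⁻¹).toMonoidHom = H i :=
      Subgroup.eq_of_le_of_card_ge hmap (by omega)
    obtain ⟨k, _, huniq⟩ := hcomplete (H j) (hcyc j)
    have hi : i = k := huniq i ⟨x⁻¹, heq⟩
    have hj : j = k := huniq j ⟨1, conj_one_map (H j)⟩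
    exact absurd (hi.trans hj.symm) hij.ne
  -- positivity of diagonal
  have hpos : ∀ i : Fin t, 0 < bMat G H i i := by
    intro i
    unfold bMat
    apply div_pos
    · have : Nonempty {x : G // ∀ y ∈ H i, x⁻¹ * y * x ∈ H i} :=
        ⟨⟨1, fun y hy => by simpa using hy⟩⟩
      exact_mod_cast Nat.card_pos
    · exact_mod_cast (Nat.card_pos (α := H i))
  refine ⟨?_, htri, hpos, ?_⟩
  · -- the expansion of the induced character
    intro i g
    obtain ⟨j₀, hj₀, huniq⟩ := hcomplete (Subgroup.zpowers g) (isCyclic_zpowers g)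
    have hP : ∀ j : Fin t, powConjInd G (h j) g = if j = j₀ then 1 else 0 := by
      intro j
      unfold powConjInd
      have hiff : (∃ x : G, Subgroup.zpowers (x * g * x⁻¹) = Subgroup.zpowers (h j)) ↔
          j = j₀ := by
        constructor
        · rintro ⟨x, hx⟩
          refine (huniq j ⟨x, ?_⟩)
          rw [MonoidHom.map_zpowers]
          rw [hgen j] at hx
          simpa [MulAut.conj_apply] using hx
        · rintro rfl
          obtain ⟨x, hx⟩ := hj₀
          rw [MonoidHom.map_zpowers] at hx
          exact ⟨x, by rw [hgen]; simpa [MulAut.conj_apply] using hx⟩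
      simp [hiff]
    obtain ⟨z, hz⟩ := hj₀
    rw [MonoidHom.map_zpowers] at hz
    have hz' : Subgroup.zpowers (z * g * z⁻¹) = H j₀ := by
      simpa [MulAut.conj_apply] using hz
    have hcond : ∀ x : G,
        (∀ y ∈ H j₀, x⁻¹ * y * x ∈ H i) ↔ (z⁻¹ * x)⁻¹ * g * (z⁻¹ * x) ∈ H i := by
      intro x
      rw [← hz', key]
      constructor <;> intro hh <;> [skip; skip] <;>
        · convert hh using 1; group
    have hequiv : {x : G // ∀ y ∈ H j₀, x⁻¹ * y * x ∈ H i} ≃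
        {x : G // x⁻¹ * g * x ∈ H i} :=
      (Equiv.mulLeft z⁻¹).subtypeEquiv (fun x => by simpa using hcond x)
    have hBval : indTrivChar G (H i) g = bMat G H i j₀ := by
      unfold indTrivChar bMat
      rw [Nat.card_congr hequiv]
    rw [hBval]
    simp [hP, mul_ite, Finset.sum_ite_eq']
  · -- invertibility
    set M : Matrix (Fin t) (Fin t) ℚ := Matrix.of (fun i j => bMat G H i j) with hM
    have hbt : M.BlockTriangular OrderDual.toDual := by
      intro i j hij
      have : i < j := hij
      by_contra hne
      exact absurd (htri i j hne) (not_le.mpr this)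
    have hdet : M.det = ∏ i, M i i := Matrix.det_of_lowerTriangular M hbt
    have hdet_ne : M.det ≠ 0 := by
      rw [hdet]
      exact ne_of_gt (Finset.prod_pos fun i _ => hpos i)
    exact (Matrix.isUnit_iff_isUnit_det M).mpr (isUnit_iff_ne_zero.mpr hdet_ne)
end

section
/- Assume 0.98·x ≤ Σ_{p ≤ x} log p ≤ 1.017·x for all x ≥ 7481 (Rosser–Schoenfeld). Then for all real k > 1 and x ≥ 7481, 0 < Σ_{p > x} (log p)/(p^k - 1) ≤ (x/(x^k - 1))·(-0.98 + 1.017·k/(k-1)). -/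
open intervalIntegral in
private lemma aux_int13 {k : ℝ} (hk : 1 < k) {a b : ℝ} (ha : 0 < a) (hab : a ≤ b) :
    a * (a ^ (-k) - b ^ (-k)) ≤ k / (k - 1) * (a ^ (1 - k) - b ^ (1 - k)) := by
  have hb : 0 < b := lt_of_lt_of_le ha hab
  have h0 : (0:ℝ) ∉ Set.uIcc a b := by
    rw [Set.uIcc_of_le hab]
    rintro ⟨h1, -⟩; linarith
  have e1 : -k - 1 + 1 = -k := by ring
  have h1 : ∫ t in a..b, t ^ (-k - 1) = (b ^ (-k) - a ^ (-k)) / (-k) := by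
    rw [integral_rpow (Or.inr ⟨by intro h; linarith, h0⟩), e1]
  have e2 : -k + 1 = 1 - k := by ring
  have h2 : ∫ t in a..b, t ^ (-k) = (b ^ (1 - k) - a ^ (1 - k)) / (1 - k) := by
    rw [integral_rpow (Or.inr ⟨by intro h; linarith, h0⟩), e2]
  have hi1 : IntervalIntegrable (fun t : ℝ => a * t ^ (-k - 1)) MeasureTheory.volume a b := by
    apply ContinuousOn.intervalIntegrable
    apply ContinuousOn.mul continuousOn_const
    apply ContinuousOn.rpow_const continuousOn_id
    intro t ht
    left
    rw [Set.uIcc_of_le hab] at ht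
    exact ne_of_gt (lt_of_lt_of_le ha ht.1)
  have hi2 : IntervalIntegrable (fun t : ℝ => t ^ (-k)) MeasureTheory.volume a b := by
    apply ContinuousOn.intervalIntegrable
    apply ContinuousOn.rpow_const continuousOn_id
    intro t ht
    left
    rw [Set.uIcc_of_le hab] at ht
    exact ne_of_gt (lt_of_lt_of_le ha ht.1)
  have hmono : ∫ t in a..b, a * t ^ (-k - 1) ≤ ∫ t in a..b, t ^ (-k) := by
    apply intervalIntegral.integral_mono_on hab hi1 hi2
    intro t ht
    have ht0 : 0 < t := lt_of_lt_of_le ha ht.1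
    have h3 := Real.rpow_add ht0 1 (-k - 1)
    rw [Real.rpow_one, show (1 + (-k - 1) : ℝ) = -k by ring] at h3
    rw [h3]
    exact mul_le_mul_of_nonneg_right ht.1 (Real.rpow_nonneg ht0.le _)
  have hia : ∫ t in a..b, a * t ^ (-k - 1) = a * ((b ^ (-k) - a ^ (-k)) / (-k)) := by
    rw [intervalIntegral.integral_const_mul, h1]
  have hk0 : (0:ℝ) < k := by linarith
  have hk1 : (0:ℝ) < k - 1 := by linarith
  have hkne : k ≠ 0 := ne_of_gt hk0
  have hk1ne : (1:ℝ) - k ≠ 0 := by intro h; linarith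
  have hk1ne' : k - 1 ≠ 0 := ne_of_gt hk1
  rw [hia, h2] at hmono
  have := mul_le_mul_of_nonneg_left hmono hk0.le
  calc a * (a ^ (-k) - b ^ (-k)) = k * (a * ((b ^ (-k) - a ^ (-k)) / (-k))) := by
        linear_combination a * div_mul_cancel₀ (b ^ (-k) - a ^ (-k)) (neg_ne_zero.mpr hkne)
    _ ≤ k * ((b ^ (1 - k) - a ^ (1 - k)) / (1 - k)) := this
    _ = k / (k - 1) * (a ^ (1 - k) - b ^ (1 - k)) := by
        rw [div_eq_mul_inv, div_eq_mul_inv, show (1 - k : ℝ) = -(k-1) by ring, inv_neg]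
        ring

private lemma abel_id13 (a f θ : ℕ → ℝ) (hθ : ∀ n, θ (n + 1) = θ n + a (n + 1)) (N : ℕ) :
    ∀ M, N + 1 ≤ M → ∑ n ∈ Finset.Ioc N M, a n * f n
      = θ M * f M - θ N * f (N + 1) + ∑ n ∈ Finset.Ico (N + 1) M, θ n * (f n - f (n + 1)) := by
  intro M hM
  induction M, hM using Nat.le_induction with
  | base =>
      rw [Finset.Ico_self, Finset.sum_empty]
      rw [Finset.sum_Ioc_succ_top (Nat.le_refl N) (fun n => a n * f n)]
      rw [Finset.Ioc_self, Finset.sum_empty, hθ N]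
      ring
  | succ M hM ih =>
      rw [Finset.sum_Ioc_succ_top (by omega : N ≤ M), Finset.sum_Ico_succ_top (by omega : N + 1 ≤ M), ih, hθ M]
      ring

private lemma telescope13 (F : ℕ → ℝ) (m M : ℕ) (h : m ≤ M) :
    ∑ n ∈ Finset.Ico m M, (F n - F (n + 1)) = F m - F M := by
  induction M, h using Nat.le_induction with
  | base => simp
  | succ M hM ih => rw [Finset.sum_Ico_succ_top hM, ih]; ring

private noncomputable def auxA13 (n : ℕ) : ℝ := if n.Prime then Real.log n else 0

private noncomputable def auxT13 (m : ℕ) : ℝ := ∑ i ∈ Finset.range (m + 1), auxA13 i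

private lemma auxA13_nonneg (n : ℕ) : 0 ≤ auxA13 n := by
  unfold auxA13
  split
  · rename_i hp
    apply Real.log_nonneg
    exact_mod_cast hp.one_lt.le
  · exact le_rfl

private lemma auxT13_succ (n : ℕ) : auxT13 (n + 1) = auxT13 n + auxA13 (n + 1) :=
  Finset.sum_range_succ auxA13 (n + 1)

private lemma auxT13_nonneg (n : ℕ) : 0 ≤ auxT13 n :=
  Finset.sum_nonneg fun i _ => auxA13_nonneg i

private lemma auxT13_filter (m : ℕ) :
    (∑ p ∈ (Finset.range (m + 1)).filter Nat.Prime, Real.log p) = auxT13 m := by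
  rw [Finset.sum_filter]; rfl

private lemma master13 {k x : ℝ} (hk : 1 < k) (hx : 7481 ≤ x)
    (hub : ∀ m : ℕ, 7481 ≤ m → auxT13 m ≤ 1.017 * m)
    (hlb : 0.98 * x ≤ auxT13 ⌊x⌋₊) (hux : auxT13 ⌊x⌋₊ ≤ 1.017 * x) (M : ℕ) :
    ∑ n ∈ Finset.Ioc ⌊x⌋₊ M, auxA13 n * (n:ℝ) ^ (-k)
      ≤ x ^ (1 - k) * (-0.98 + 1.017 * (k / (k - 1))) := by
  have hx0 : (0:ℝ) < x := by linarith
  set N := ⌊x⌋₊ with hNdef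
  have hNle : (N:ℝ) ≤ x := Nat.floor_le hx0.le
  have hNlt : x < (N:ℝ) + 1 := Nat.lt_floor_add_one x
  have hN7481 : 7481 ≤ N := Nat.le_floor (by exact_mod_cast hx)
  have hk10 : (0:ℝ) < k - 1 := by linarith
  have hkk : 1 ≤ k / (k - 1) := (one_le_div hk10).mpr (by linarith)
  have hE : (0:ℝ) < -0.98 + 1.017 * (k / (k - 1)) := by nlinarith
  by_cases hM : N + 1 ≤ M
  · rw [abel_id13 auxA13 (fun n => (n:ℝ) ^ (-k)) auxT13 auxT13_succ N M hM]
    set c := k / (k - 1) with hcdef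
    -- term 1
    have hMc : (7481:ℝ) ≤ (M:ℝ) := by exact_mod_cast (by omega : 7481 ≤ M)
    have hM0 : (0:ℝ) < (M:ℝ) := by linarith
    have hterm1 : auxT13 M * (M:ℝ) ^ (-k) ≤ 1.017 * (c * (M:ℝ) ^ (1 - k)) := by
      have h1 := hub M (by omega)
      have hsplit : (M:ℝ) * (M:ℝ) ^ (-k) = (M:ℝ) ^ (1 - k) := by
        rw [show (1 - k : ℝ) = 1 + -k by ring, Real.rpow_add hM0, Real.rpow_one]
      have h2 : auxT13 M * (M:ℝ) ^ (-k) ≤ 1.017 * (M:ℝ) * (M:ℝ) ^ (-k) :=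
        mul_le_mul_of_nonneg_right h1 (Real.rpow_nonneg hM0.le _)
      have h3 : (0:ℝ) ≤ (M:ℝ) ^ (1 - k) := Real.rpow_nonneg hM0.le _
      calc auxT13 M * (M:ℝ) ^ (-k) ≤ 1.017 * (M:ℝ) * (M:ℝ) ^ (-k) := h2
        _ = 1.017 * (M:ℝ) ^ (1 - k) := by rw [mul_assoc, hsplit]
        _ ≤ 1.017 * (c * (M:ℝ) ^ (1 - k)) := by nlinarith
    -- middle sum
    have htermsum : ∑ n ∈ Finset.Ico (N + 1) M, auxT13 n * ((n:ℝ) ^ (-k) - ((n + 1 : ℕ):ℝ) ^ (-k))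
        ≤ 1.017 * (c * (((N + 1 : ℕ):ℝ) ^ (1 - k) - (M:ℝ) ^ (1 - k))) := by
      have hstep : ∀ n ∈ Finset.Ico (N + 1) M,
          auxT13 n * ((n:ℝ) ^ (-k) - ((n + 1 : ℕ):ℝ) ^ (-k))
            ≤ 1.017 * c * (((n:ℕ):ℝ) ^ (1 - k) - ((n + 1 : ℕ):ℝ) ^ (1 - k)) := by
        intro n hn
        rw [Finset.mem_Ico] at hn
        have hn0 : (0:ℝ) < (n:ℝ) := by
          have : 1 ≤ n := by omega
          exact_mod_cast Nat.lt_of_lt_of_le Nat.zero_lt_one this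
        have hcast : ((n + 1 : ℕ):ℝ) = (n:ℝ) + 1 := by push_cast; ring
        have hfanti : ((n + 1 : ℕ):ℝ) ^ (-k) ≤ (n:ℝ) ^ (-k) := by
          rw [hcast]
          exact Real.rpow_le_rpow_of_nonpos hn0 (by linarith) (by linarith)
        have hTub : auxT13 n ≤ 1.017 * n := hub n (by omega)
        have hint : (n:ℝ) * ((n:ℝ) ^ (-k) - ((n + 1 : ℕ):ℝ) ^ (-k))
            ≤ c * ((n:ℝ) ^ (1 - k) - ((n + 1 : ℕ):ℝ) ^ (1 - k)) := by
          rw [hcast]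
          exact aux_int13 hk hn0 (by linarith)
        have h4 : auxT13 n * ((n:ℝ) ^ (-k) - ((n + 1 : ℕ):ℝ) ^ (-k))
            ≤ 1.017 * (n:ℝ) * ((n:ℝ) ^ (-k) - ((n + 1 : ℕ):ℝ) ^ (-k)) :=
          mul_le_mul_of_nonneg_right hTub (by linarith)
        have h5 := mul_le_mul_of_nonneg_left hint (by norm_num : (0:ℝ) ≤ 1.017)
        calc auxT13 n * ((n:ℝ) ^ (-k) - ((n + 1 : ℕ):ℝ) ^ (-k))
            ≤ 1.017 * (n:ℝ) * ((n:ℝ) ^ (-k) - ((n + 1 : ℕ):ℝ) ^ (-k)) := h4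
          _ = 1.017 * ((n:ℝ) * ((n:ℝ) ^ (-k) - ((n + 1 : ℕ):ℝ) ^ (-k))) := by ring
          _ ≤ 1.017 * (c * ((n:ℝ) ^ (1 - k) - ((n + 1 : ℕ):ℝ) ^ (1 - k))) := h5
          _ = 1.017 * c * (((n:ℕ):ℝ) ^ (1 - k) - ((n + 1 : ℕ):ℝ) ^ (1 - k)) := by ring
      calc ∑ n ∈ Finset.Ico (N + 1) M, auxT13 n * ((n:ℝ) ^ (-k) - ((n + 1 : ℕ):ℝ) ^ (-k))
          ≤ ∑ n ∈ Finset.Ico (N + 1) M, 1.017 * c * (((n:ℕ):ℝ) ^ (1 - k) - ((n + 1 : ℕ):ℝ) ^ (1 - k)) :=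
            Finset.sum_le_sum hstep
        _ = 1.017 * c * ∑ n ∈ Finset.Ico (N + 1) M, (((n:ℕ):ℝ) ^ (1 - k) - ((n + 1 : ℕ):ℝ) ^ (1 - k)) := by
            rw [Finset.mul_sum]
        _ = 1.017 * (c * (((N + 1 : ℕ):ℝ) ^ (1 - k) - (M:ℝ) ^ (1 - k))) := by
            rw [telescope13 (fun n : ℕ => ((n:ℕ):ℝ) ^ (1 - k)) (N + 1) M hM]
            ring
    -- term 2
    have hNcast : ((N + 1 : ℕ):ℝ) = (N:ℝ) + 1 := by push_cast; ring
    have hxk0 : (0:ℝ) ≤ x ^ (-k) := Real.rpow_nonneg hx0.le _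
    have hterm2 : -(auxT13 N * ((N + 1 : ℕ):ℝ) ^ (-k))
        ≤ -(0.98 * x * x ^ (-k)) + 1.017 * (c * (x ^ (1 - k) - ((N + 1 : ℕ):ℝ) ^ (1 - k))) := by
      have h2 : ((N + 1 : ℕ):ℝ) ^ (-k) ≤ x ^ (-k) := by
        rw [hNcast]
        exact Real.rpow_le_rpow_of_nonpos hx0 (by linarith) (by linarith)
      have h1 : x * (x ^ (-k) - ((N + 1 : ℕ):ℝ) ^ (-k))
          ≤ c * (x ^ (1 - k) - ((N + 1 : ℕ):ℝ) ^ (1 - k)) := by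
        rw [hNcast]
        exact aux_int13 hk hx0 (by linarith)
      have hA : 0.98 * x * x ^ (-k) ≤ auxT13 N * x ^ (-k) :=
        mul_le_mul_of_nonneg_right hlb hxk0
      have hB : auxT13 N * (x ^ (-k) - ((N + 1 : ℕ):ℝ) ^ (-k))
          ≤ 1.017 * x * (x ^ (-k) - ((N + 1 : ℕ):ℝ) ^ (-k)) :=
        mul_le_mul_of_nonneg_right hux (by linarith)
      have hC := mul_le_mul_of_nonneg_left h1 (by norm_num : (0:ℝ) ≤ 1.017)
      linarith [hA, hB, hC]
    have hxsplit : x * x ^ (-k) = x ^ (1 - k) := by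
      rw [show (1 - k : ℝ) = 1 + -k by ring, Real.rpow_add hx0, Real.rpow_one]
    have goal2 : auxT13 M * (M:ℝ) ^ (-k) - auxT13 N * ((N + 1 : ℕ):ℝ) ^ (-k)
        + ∑ n ∈ Finset.Ico (N + 1) M, auxT13 n * ((n:ℝ) ^ (-k) - ((n + 1 : ℕ):ℝ) ^ (-k))
        ≤ x ^ (1 - k) * (-0.98 + 1.017 * c) := by
      linarith [hterm1, hterm2, htermsum, hxsplit]
    exact goal2
  · rw [Finset.Ioc_eq_empty (by omega), Finset.sum_empty]
    positivity
/-- Assume `0.98 x ≤ ∑_{p ≤ x} log p ≤ 1.017 x` for all `x ≥ 7481` (Rosser–Schoenfeld).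
Then for all real `k > 1` and `x ≥ 7481`,
`0 < ∑_{p > x} (log p)/(p^k - 1) ≤ (x/(x^k - 1)) (-0.98 + 1.017 k/(k-1))`. -/
theorem stmt_13
    (htheta : ∀ x : ℝ, 7481 ≤ x →
      0.98 * x ≤ ∑ p ∈ (Finset.range (⌊x⌋₊ + 1)).filter Nat.Prime, Real.log p ∧
      (∑ p ∈ (Finset.range (⌊x⌋₊ + 1)).filter Nat.Prime, Real.log p) ≤ 1.017 * x)
    (k : ℝ) (hk : 1 < k) (x : ℝ) (hx : 7481 ≤ x) :
    0 < ∑' p : {p : ℕ // p.Prime ∧ x < (p : ℝ)}, Real.log p.1 / ((p.1 : ℝ) ^ k - 1) ∧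
    (∑' p : {p : ℕ // p.Prime ∧ x < (p : ℝ)}, Real.log p.1 / ((p.1 : ℝ) ^ k - 1)) ≤
      (x / (x ^ k - 1)) * (-0.98 + 1.017 * k / (k - 1)) := by
  have hx0 : (0:ℝ) < x := by linarith
  have hk0 : (0:ℝ) < k := by linarith
  have hk10 : (0:ℝ) < k - 1 := by linarith
  set N := ⌊x⌋₊ with hNdef
  have hNle : (N:ℝ) ≤ x := Nat.floor_le hx0.le
  have hNlt : x < (N:ℝ) + 1 := Nat.lt_floor_add_one x
  obtain ⟨hlb, hux⟩ := htheta x hx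
  rw [auxT13_filter] at hlb hux
  have hub : ∀ m : ℕ, 7481 ≤ m → auxT13 m ≤ 1.017 * m := by
    intro m hm
    have h := (htheta m (by exact_mod_cast hm)).2
    rwa [Nat.floor_natCast, auxT13_filter] at h
  have hxk1 : (1:ℝ) < x ^ k := by
    rw [show (1:ℝ) = 1 ^ k by rw [Real.one_rpow]]
    exact Real.rpow_lt_rpow (by norm_num) (by linarith) hk0
  have hdenom : ∀ n : ℕ, n.Prime → (1:ℝ) < (n:ℝ) ^ k := by
    intro n hn
    have h2 : (1:ℝ) < (n:ℝ) := by exact_mod_cast hn.one_lt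
    rw [show (1:ℝ) = 1 ^ k by rw [Real.one_rpow]]
    exact Real.rpow_lt_rpow (by norm_num) h2 hk0
  set g : ℕ → ℝ := fun n => if n.Prime ∧ x < (n:ℝ) then Real.log n / ((n:ℝ) ^ k - 1) else 0
    with hgdef
  have hg0 : ∀ n, 0 ≤ g n := by
    intro n
    simp only [hgdef]
    split
    · rename_i hcond
      have := hdenom n hcond.1
      apply div_nonneg _ (by linarith)
      apply Real.log_nonneg
      exact_mod_cast hcond.1.one_lt.le
    · exact le_rfl
  set C : ℝ := x ^ k / (x ^ k - 1) with hCdef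
  have hC0 : 0 ≤ C := div_nonneg (by positivity) (by linarith)
  have hgle : ∀ n : ℕ, g n ≤ (if N < n then C * (auxA13 n * (n:ℝ) ^ (-k)) else 0) := by
    intro n
    simp only [hgdef]
    by_cases hcond : n.Prime ∧ x < (n:ℝ)
    · rw [if_pos hcond]
      have hNn : N < n := by
        have : (N:ℝ) < (n:ℝ) := lt_of_le_of_lt hNle hcond.2
        exact_mod_cast this
      rw [if_pos hNn]
      have hn1 : (1:ℝ) < (n:ℝ) := lt_trans (by linarith) hcond.2
      have hn0 : (0:ℝ) < (n:ℝ) := by linarith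
      have hnk : x ^ k ≤ (n:ℝ) ^ k := Real.rpow_le_rpow hx0.le hcond.2.le hk0.le
      have hnk1 : (1:ℝ) < (n:ℝ) ^ k := lt_of_lt_of_le hxk1 hnk
      have hkey : 1 / ((n:ℝ) ^ k - 1) ≤ C * ((n:ℝ) ^ k)⁻¹ := by
        have he : C * ((n:ℝ) ^ k)⁻¹ = x ^ k / ((x ^ k - 1) * (n:ℝ) ^ k) := by
          rw [hCdef, ← div_eq_mul_inv, div_div]
        rw [he, div_le_div_iff₀ (by linarith) (mul_pos (by linarith : (0:ℝ) < x ^ k - 1) (Real.rpow_pos_of_pos hn0 k))]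
        nlinarith [hnk]
      have hlogn : 0 ≤ Real.log n := Real.log_nonneg hn1.le
      calc Real.log n / ((n:ℝ) ^ k - 1) = Real.log n * (1 / ((n:ℝ) ^ k - 1)) := by ring
        _ ≤ Real.log n * (C * ((n:ℝ) ^ k)⁻¹) := mul_le_mul_of_nonneg_left hkey hlogn
        _ = C * (auxA13 n * (n:ℝ) ^ (-k)) := by
            simp only [auxA13, if_pos hcond.1, Real.rpow_neg hn0.le]
            ring
    · rw [if_neg hcond]
      split
      · exact mul_nonneg hC0 (mul_nonneg (auxA13_nonneg n) (Real.rpow_nonneg (Nat.cast_nonneg n) _))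
      · exact le_rfl
  have hrange : ∀ M : ℕ, ∑ n ∈ Finset.range M, g n
      ≤ (x / (x ^ k - 1)) * (-0.98 + 1.017 * k / (k - 1)) := by
    intro M
    have h1 : ∑ n ∈ Finset.range M, g n
        ≤ ∑ n ∈ Finset.range M, (if N < n then C * (auxA13 n * (n:ℝ) ^ (-k)) else 0) :=
      Finset.sum_le_sum fun n _ => hgle n
    have h2 : ∑ n ∈ Finset.range M, (if N < n then C * (auxA13 n * (n:ℝ) ^ (-k)) else 0)
        = ∑ n ∈ (Finset.range M).filter (fun n => N < n), C * (auxA13 n * (n:ℝ) ^ (-k)) :=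
      (Finset.sum_filter _ _).symm
    have h3 : ∑ n ∈ (Finset.range M).filter (fun n => N < n), C * (auxA13 n * (n:ℝ) ^ (-k))
        ≤ ∑ n ∈ Finset.Ioc N M, C * (auxA13 n * (n:ℝ) ^ (-k)) := by
      apply Finset.sum_le_sum_of_subset_of_nonneg
      · intro n hn
        simp only [Finset.mem_filter, Finset.mem_range] at hn
        rw [Finset.mem_Ioc]
        omega
      · intro n _ _
        exact mul_nonneg hC0 (mul_nonneg (auxA13_nonneg n) (Real.rpow_nonneg (Nat.cast_nonneg n) _))
    have h4 : ∑ n ∈ Finset.Ioc N M, C * (auxA13 n * (n:ℝ) ^ (-k))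
        = C * ∑ n ∈ Finset.Ioc N M, auxA13 n * (n:ℝ) ^ (-k) := (Finset.mul_sum _ _ _).symm
    have h5 := master13 hk hx hub hlb hux M
    have h6 : C * ∑ n ∈ Finset.Ioc N M, auxA13 n * (n:ℝ) ^ (-k)
        ≤ C * (x ^ (1 - k) * (-0.98 + 1.017 * (k / (k - 1)))) := mul_le_mul_of_nonneg_left h5 hC0
    have hxx : x ^ k * x ^ (1 - k) = x := by
      rw [← Real.rpow_add hx0]; norm_num
    have h7 : C * (x ^ (1 - k) * (-0.98 + 1.017 * (k / (k - 1))))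
        = (x / (x ^ k - 1)) * (-0.98 + 1.017 * k / (k - 1)) := by
      rw [hCdef]
      linear_combination ((-0.98 + 1.017 * (k / (k - 1))) / (x ^ k - 1)) * hxx
    linarith [h1, h2.le, h3, h4.le, h6, h7.le]
  have hs : Summable g := summable_of_sum_range_le hg0 hrange
  have heq : (∑' p : {p : ℕ // p.Prime ∧ x < (p : ℝ)}, Real.log p.1 / ((p.1 : ℝ) ^ k - 1))
      = ∑' n, g n := by
    calc (∑' p : {p : ℕ // p.Prime ∧ x < (p : ℝ)}, Real.log p.1 / ((p.1 : ℝ) ^ k - 1))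
        = ∑' n : ℕ, Set.indicator {p : ℕ | p.Prime ∧ x < (p : ℝ)}
            (fun n : ℕ => Real.log n / ((n:ℝ) ^ k - 1)) n := by
            exact tsum_subtype {p : ℕ | Nat.Prime p ∧ x < (p : ℝ)}
              (fun n : ℕ => Real.log n / ((n:ℝ) ^ k - 1))
      _ = ∑' n, g n := by
          apply tsum_congr
          intro n
          rw [Set.indicator_apply]
          simp only [hgdef, Set.mem_setOf_eq]
  obtain ⟨p, hple, hp⟩ := Nat.exists_infinite_primes (N + 1)
  have hxp : x < (p:ℝ) := lt_of_lt_of_le hNlt (by exact_mod_cast hple)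
  have hgp : 0 < g p := by
    simp only [hgdef]
    rw [if_pos ⟨hp, hxp⟩]
    have h1 : (1:ℝ) < (p:ℝ) := by exact_mod_cast hp.one_lt
    exact div_pos (Real.log_pos h1) (by linarith [hdenom p hp])
  constructor
  · rw [heq]
    exact Summable.tsum_pos hs hg0 p hgp
  · rw [heq]
    exact Real.tsum_le_of_sum_range_le hg0 hrange
end
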